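/- Let h be a nonzero complex number and R = ℂ[x₁,x₄]/(x₁², x₄² − x₁x₄), with x₂ = x₄ − x₁. For an integer k set c_k = (∏_{m=1}^{k} (x₂ + m·h))^{-1} if k ≥ 0 and c_k = ∏_{m=k+1}^{0} (x₂ + m·h) if k < 0. For integers e, d ≥ 0 set a_{e,d} = (∏_{m=1}^{e} (x₁ + m·h))^{-2} · (∏_{m=1}^{d} (x₄ + m·h))^{-1} · c_{d−e} ∈ R, and a_{e,d} = 0 if e < 0 or d < 0. Let J = ∑_{e,d≥0} a_{e,d} r₁^{e} r₂^{d} ∈ R[[r₁,r₂]], and let E₁, E₂ : R[[r₁,r₂]] → R[[r₁,r₂]] be the ℂ-linear operators multiplying the coefficient of r₁^{e} r₂^{d} by (x₁ + e·h) and by (x₄ + d·h) respectively. Then (E₂² − E₁E₂)J = r₂·J; equivalently, for all e ≥ 0 and d ≥ 1, a_{e,d}·((x₄+dh)² − (x₁+eh)(x₄+dh)) = a_{e,d−1}. This is the first quantum differential equation D₁J = 0 of the Hirzebruch surface Σ₁, where D₁ = h²∂₂² − h²∂₁∂₂ − r₂. -/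

import Mathlib

/-! In `R` one has `x₄ x₂ = x₄² − x₁x₄ = 0`, so the symbol of the operator factors as
`(x₄ + dh)² − (x₁ + eh)(x₄ + dh) = (x₄ + dh)(x₂ + (d − e)h)`. For `d ≥ 1` the first factor
cancels the last factor of `∏_{m ≤ d} (x₄ + mh)` and the second one turns `c_{d−e}` into
`c_{d−e−1}`, leaving `a_{e,d−1}`. For `d = 0` the factor `x₄` meets the factor `x₂` of
`c_{−e−1} = ∏_{m=−e}^{0} (x₂ + mh)`, so the coefficient vanishes, as does that of `r₂ J`. -/

/-- The cohomology ring `H^*(Σ₁;ℂ) = ℂ[x₁,x₄]/(x₁², x₄² − x₁x₄)` of the Hirzebruch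
surface `Σ₁ = P(O(0) ⊕ O(−1))`. -/
noncomputable abbrev HirzCohomology : Type :=
  MvPolynomial (Fin 2) ℂ ⧸ Ideal.span
    {(MvPolynomial.X 0 : MvPolynomial (Fin 2) ℂ) ^ 2,
      (MvPolynomial.X 1 : MvPolynomial (Fin 2) ℂ) ^ 2 - MvPolynomial.X 0 * MvPolynomial.X 1}

/-- The degree-two generator `x₁`. -/
noncomputable abbrev hirzX1 : HirzCohomology :=
  Ideal.Quotient.mk _ (MvPolynomial.X 0)

/-- The degree-two generator `x₄`. -/
noncomputable abbrev hirzX4 : HirzCohomology :=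
  Ideal.Quotient.mk _ (MvPolynomial.X 1)

/-- The class `x₂ = x₄ − x₁`. -/
noncomputable abbrev hirzX2 : HirzCohomology := hirzX4 - hirzX1

open Finset

lemma IsNilpotent.isUnit_add_algebraMap {K R : Type*} [Field K] [Ring R] [Algebra K R]
    {x : R} (hx : IsNilpotent x) {z : K} (hz : z ≠ 0) : IsUnit (x + algebraMap K R z) :=
  hx.isUnit_add_right_of_commute ((isUnit_iff_ne_zero.2 hz).map _)
    (Algebra.commute_algebraMap_right z x)

lemma MvPowerSeries.coeff_X_mul_eq_ite {σ R : Type*} [CommSemiring R] (φ : MvPowerSeries σ R)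
    (i : σ) (s : σ →₀ ℕ) :
    coeff s (X i * φ) = if s i = 0 then 0 else coeff (s - Finsupp.single i 1) φ := by
  rw [X_def, coeff_monomial_mul, one_mul]
  by_cases hs : s i = 0
  · rw [if_neg (by simp [Finsupp.single_le_iff, hs]), if_pos hs]
  · rw [if_pos (by simp [Finsupp.single_le_iff]; omega), if_neg hs]

section InverseProducts

variable {M : Type*} [CommMonoidWithZero M]

lemma Ring.inverse_prod_range_succ_mul (g : ℕ → M) {d : ℕ} (hg : IsUnit (g d)) :
    Ring.inverse (∏ k ∈ range (d + 1), g k) * g d = Ring.inverse (∏ k ∈ range d, g k) := by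
  rw [prod_range_succ, Ring.mul_inverse_rev, mul_right_comm, Ring.inverse_mul_cancel _ hg, one_mul]

/-- `(∏_{m=1}^{k} f m)⁻¹`, continued to `k < 0` by `∏_{m=k+1}^{0} f m`, which is the unique
continuation satisfying `shiftedProdInv f k * f k = shiftedProdInv f (k - 1)`. -/
noncomputable def shiftedProdInv (f : ℤ → M) (k : ℤ) : M :=
  if 0 ≤ k then Ring.inverse (∏ m ∈ Icc 1 k, f m) else ∏ m ∈ Icc (k + 1) 0, f m

lemma shiftedProdInv_mul_self (f : ℤ → M) {k : ℤ} (hf : 0 < k → IsUnit (f k)) :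
    shiftedProdInv f k * f k = shiftedProdInv f (k - 1) := by
  unfold shiftedProdInv
  rcases lt_trichotomy k 0 with hk | rfl | hk
  · rw [if_neg hk.not_ge, if_neg (by omega), sub_add_cancel,
      ← insert_Icc_add_one_left_eq_Icc hk.le, prod_insert (by simp), mul_comm]
  · simp
  · rw [if_pos hk.le, if_pos (by omega), ← insert_Icc_sub_one_right_eq_Icc (by omega : 1 ≤ k),
      prod_insert (by simp), Ring.mul_inverse_rev, mul_assoc, Ring.inverse_mul_cancel _ (hf hk),
      mul_one]

lemma dvd_shiftedProdInv_of_neg (f : ℤ → M) {k : ℤ} (hk : k < 0) : f 0 ∣ shiftedProdInv f k := by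
  rw [shiftedProdInv, if_neg hk.not_ge]
  exact dvd_prod_of_mem f (by simp; omega)

end InverseProducts

section Hirzebruch

local notation "ι" => algebraMap ℂ HirzCohomology

lemma hirzX1_sq : hirzX1 ^ 2 = 0 := by
  rw [← map_pow]
  exact Ideal.Quotient.eq_zero_iff_mem.mpr (Ideal.subset_span (by simp))

lemma hirzX4_sq : hirzX4 ^ 2 = hirzX1 * hirzX4 := by
  rw [← map_pow, ← map_mul, Ideal.Quotient.eq]
  exact Ideal.subset_span (by simp)

lemma hirzX4_mul_hirzX2 : hirzX4 * hirzX2 = 0 := by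
  linear_combination hirzX4_sq

lemma isNilpotent_hirzX4 : IsNilpotent hirzX4 :=
  ⟨3, by linear_combination (hirzX4 + hirzX1) * hirzX4_sq + hirzX4 * hirzX1_sq⟩

lemma isNilpotent_hirzX2 : IsNilpotent hirzX2 :=
  (Commute.all _ _).isNilpotent_sub isNilpotent_hirzX4 ⟨2, hirzX1_sq⟩

lemma hirz_symbol_eq_mul (h a b : ℂ) :
    (hirzX4 + ι (b * h)) ^ 2 - (hirzX1 + ι (a * h)) * (hirzX4 + ι (b * h)) =
      (hirzX4 + ι (b * h)) * (hirzX2 + ι ((b - a) * h)) := by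
  rw [sub_mul, map_sub]
  ring

variable (h : ℂ)

noncomputable def hirzC : ℤ → HirzCohomology :=
  shiftedProdInv fun m : ℤ => hirzX2 + ι (m * h)

noncomputable def hirzCoeff (e d : ℕ) : HirzCohomology :=
  Ring.inverse (∏ k ∈ range e, (hirzX1 + ι (((k : ℂ) + 1) * h))) ^ 2 *
    Ring.inverse (∏ k ∈ range d, (hirzX4 + ι (((k : ℂ) + 1) * h))) * hirzC h ((d : ℤ) - e)

variable {h}

lemma hirzC_mul (hh : h ≠ 0) (k : ℤ) : hirzC h k * (hirzX2 + ι (k * h)) = hirzC h (k - 1) :=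
  shiftedProdInv_mul_self _ fun hk ↦
    isNilpotent_hirzX2.isUnit_add_algebraMap (mul_ne_zero (by exact_mod_cast hk.ne') hh)

lemma hirzX4_mul_hirzC_of_neg {k : ℤ} (hk : k < 0) : hirzX4 * hirzC h k = 0 := by
  obtain ⟨u, hu⟩ := dvd_shiftedProdInv_of_neg (fun m : ℤ => hirzX2 + ι (m * h)) hk
  rw [hirzC, hu, Int.cast_zero, zero_mul, map_zero, add_zero, ← mul_assoc, hirzX4_mul_hirzX2,
    zero_mul]

lemma hirzCoeff_mul_factor (hh : h ≠ 0) (e d : ℕ) :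
    hirzCoeff h e d * ((hirzX4 + ι (d * h)) * (hirzX2 + ι (((d : ℤ) - e : ℤ) * h))) =
      if d = 0 then 0 else hirzCoeff h e (d - 1) := by
  cases d with
  | zero =>
    simp only [hirzCoeff, ↓reduceIte, Nat.cast_zero, zero_mul, map_zero, add_zero]
    rw [mul_mul_mul_comm, hirzC_mul hh, mul_assoc, hirzX4_mul_hirzC_of_neg (by omega), mul_zero]
  | succ d =>
    have hx4 : IsUnit (hirzX4 + ι (((d : ℂ) + 1) * h)) :=
      isNilpotent_hirzX4.isUnit_add_algebraMap (mul_ne_zero (Nat.cast_add_one_ne_zero d) hh)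
    simp only [hirzCoeff, add_eq_zero, one_ne_zero, and_false, ↓reduceIte,
      add_tsub_cancel_right, Nat.cast_add, Nat.cast_one]
    rw [mul_mul_mul_comm, mul_assoc _ (Ring.inverse _), Ring.inverse_prod_range_succ_mul _ hx4,
      hirzC_mul hh, add_sub_right_comm, add_sub_cancel_right]

lemma hirzCoeff_mul_symbol (hh : h ≠ 0) (e d : ℕ) :
    hirzCoeff h e d * ((hirzX4 + ι (d * h)) ^ 2 - (hirzX1 + ι (e * h)) * (hirzX4 + ι (d * h))) =
      if d = 0 then 0 else hirzCoeff h e (d - 1) := by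
  rw [hirz_symbol_eq_mul, ← hirzCoeff_mul_factor hh]
  push_cast
  rfl

end Hirzebruch

theorem stmt_10_general (h : ℂ) (hh : h ≠ 0)
    -- the factors `c_k`
    (c : ℤ → HirzCohomology)
    (hc1 : ∀ k : ℤ, 0 ≤ k → c k =
      Ring.inverse (∏ m ∈ Finset.Icc (1 : ℤ) k,
        (hirzX2 + algebraMap ℂ HirzCohomology ((m : ℂ) * h))))
    (hc2 : ∀ k : ℤ, k < 0 → c k =
      ∏ m ∈ Finset.Icc (k + 1) (0 : ℤ),
        (hirzX2 + algebraMap ℂ HirzCohomology ((m : ℂ) * h)))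
    -- the coefficients `a_{e,d}`, extended by zero to negative indices
    (A : ℤ → ℤ → HirzCohomology)
    (hA : ∀ e d : ℕ, A e d =
      Ring.inverse (∏ k ∈ Finset.range e,
          (hirzX1 + algebraMap ℂ HirzCohomology (((k : ℂ) + 1) * h))) ^ 2 *
        Ring.inverse (∏ k ∈ Finset.range d,
          (hirzX4 + algebraMap ℂ HirzCohomology (((k : ℂ) + 1) * h))) *
        c ((d : ℤ) - (e : ℤ)))
    -- `J = ∑ a_{e,d} r₁^{e} r₂^{d}`
    (J : MvPowerSeries (Fin 2) HirzCohomology)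
    (hJ : ∀ s : Fin 2 →₀ ℕ, MvPowerSeries.coeff s J = A (s 0) (s 1))
    -- the operators `E₁`, `E₂` multiplying the coefficient of `r₁^{e} r₂^{d}`
    -- by `x₁ + e·h` and `x₄ + d·h` respectively
    (E1 E2 : MvPowerSeries (Fin 2) HirzCohomology → MvPowerSeries (Fin 2) HirzCohomology)
    (hE1 : ∀ F s, MvPowerSeries.coeff s (E1 F) =
      (hirzX1 + algebraMap ℂ HirzCohomology ((s 0 : ℂ) * h)) *
        MvPowerSeries.coeff s F)
    (hE2 : ∀ F s, MvPowerSeries.coeff s (E2 F) =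
      (hirzX4 + algebraMap ℂ HirzCohomology ((s 1 : ℂ) * h)) *
        MvPowerSeries.coeff s F) :
    -- `(E₂² − E₁E₂) J = r₂ J`
    E2 (E2 J) - E1 (E2 J) = MvPowerSeries.X 1 * J ∧
    -- equivalently, the coefficient recursion
    ∀ e d : ℤ, 0 ≤ e → 1 ≤ d →
      A e d *
        ((hirzX4 + algebraMap ℂ HirzCohomology ((d : ℂ) * h)) ^ 2
          - (hirzX1 + algebraMap ℂ HirzCohomology ((e : ℂ) * h))
              * (hirzX4 + algebraMap ℂ HirzCohomology ((d : ℂ) * h)))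
        = A e (d - 1) := by
  have hc : c = hirzC h := by
    funext k
    unfold hirzC shiftedProdInv
    split_ifs with hk
    exacts [hc1 k hk, hc2 k (not_le.1 hk)]
  have hA' (e d : ℕ) : A e d = hirzCoeff h e d := by rw [hA, hc, hirzCoeff]
  refine ⟨MvPowerSeries.ext fun s ↦ ?_, fun e d he hd ↦ ?_⟩
  · rw [map_sub, hE2, hE2, hE1, hE2, MvPowerSeries.coeff_X_mul_eq_ite, hJ, hJ, hA', hA',
      Finsupp.tsub_apply, Finsupp.tsub_apply, Finsupp.single_eq_of_ne (by decide),
      Finsupp.single_eq_same, Nat.sub_zero, ← hirzCoeff_mul_symbol hh]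
    ring
  · lift e to ℕ using he
    obtain ⟨d, rfl⟩ : ∃ n : ℕ, d = n + 1 := ⟨(d - 1).toNat, by omega⟩
    have := hirzCoeff_mul_symbol hh e (d + 1)
    push_cast at this ⊢
    rw [add_sub_cancel_right, ← Nat.cast_add_one, hA', hA', this]

theorem stmt_10 (h : ℂ) (hh : h ≠ 0)
    -- the factors `c_k`
    (c : ℤ → HirzCohomology)
    (hc1 : ∀ k : ℤ, 0 ≤ k → c k =
      Ring.inverse (∏ m ∈ Finset.Icc (1 : ℤ) k,
        (hirzX2 + algebraMap ℂ HirzCohomology ((m : ℂ) * h))))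
    (hc2 : ∀ k : ℤ, k < 0 → c k =
      ∏ m ∈ Finset.Icc (k + 1) (0 : ℤ),
        (hirzX2 + algebraMap ℂ HirzCohomology ((m : ℂ) * h)))
    -- the coefficients `a_{e,d}`, extended by zero to negative indices
    (A : ℤ → ℤ → HirzCohomology)
    (hA : ∀ e d : ℕ, A e d =
      Ring.inverse (∏ k ∈ Finset.range e,
          (hirzX1 + algebraMap ℂ HirzCohomology (((k : ℂ) + 1) * h))) ^ 2 *
        Ring.inverse (∏ k ∈ Finset.range d,
          (hirzX4 + algebraMap ℂ HirzCohomology (((k : ℂ) + 1) * h))) *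
        c ((d : ℤ) - (e : ℤ)))
    (hA0 : ∀ e d : ℤ, e < 0 ∨ d < 0 → A e d = 0)
    -- `J = ∑ a_{e,d} r₁^{e} r₂^{d}`
    (J : MvPowerSeries (Fin 2) HirzCohomology)
    (hJ : ∀ s : Fin 2 →₀ ℕ, MvPowerSeries.coeff s J = A (s 0) (s 1))
    -- the operators `E₁`, `E₂` multiplying the coefficient of `r₁^{e} r₂^{d}`
    -- by `x₁ + e·h` and `x₄ + d·h` respectively
    (E1 E2 : MvPowerSeries (Fin 2) HirzCohomology → MvPowerSeries (Fin 2) HirzCohomology)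
    (hE1 : ∀ F s, MvPowerSeries.coeff s (E1 F) =
      (hirzX1 + algebraMap ℂ HirzCohomology ((s 0 : ℂ) * h)) *
        MvPowerSeries.coeff s F)
    (hE2 : ∀ F s, MvPowerSeries.coeff s (E2 F) =
      (hirzX4 + algebraMap ℂ HirzCohomology ((s 1 : ℂ) * h)) *
        MvPowerSeries.coeff s F) :
    -- `(E₂² − E₁E₂) J = r₂ J`
    E2 (E2 J) - E1 (E2 J) = MvPowerSeries.X 1 * J ∧
    -- equivalently, the coefficient recursion
    ∀ e d : ℤ, 0 ≤ e → 1 ≤ d →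
      A e d *
        ((hirzX4 + algebraMap ℂ HirzCohomology ((d : ℂ) * h)) ^ 2
          - (hirzX1 + algebraMap ℂ HirzCohomology ((e : ℂ) * h))
              * (hirzX4 + algebraMap ℂ HirzCohomology ((d : ℂ) * h)))
        = A e (d - 1) :=
  stmt_10_general h hh c hc1 hc2 A hA J hJ E1 E2 hE1 hE2
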